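/- Let t = (t_1, …, t_n) be a time series and let r = (r_1, …, r_{m+1}) be a pattern (m ≥ 1) whose prefix sub-pattern is e = (r_1, …, r_m). If ⟨j⟩ is an occurrence of r in t (so R(t_{j−m}, …, t_j) = R(r)), then ⟨j−1⟩ is an occurrence of e in t. Consequently the map j ↦ j−1 injects the occurrence set L_r into the occurrence set L_e, and |L_r| ≤ |L_e| (anti-monotonicity with respect to the prefix pattern). -/

import Mathlib

open scoped Classical

/-- The rank of the `i`-th entry of a finite sequence `a`:
`rank_a(a_i) = 1 + |{j : a_j < a_i}|`. -/
noncomputable def rankOf {m : ℕ} (a : Fin m → ℝ) (i : Fin m) : ℕ :=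
  1 + (Finset.univ.filter fun j => a j < a i).card

/-- The relative order `R(a) = (rank_a(a_1), …, rank_a(a_m))`. -/
noncomputable def relOrder {m : ℕ} (a : Fin m → ℝ) : Fin m → ℕ :=
  fun i => rankOf a i

/-- `⟨j⟩` (1-based, `m ≤ j ≤ n`) is an occurrence of the length-`m` pattern `p` in
the time series `t = (t_1, …, t_n)`:  `R(t_{j-m+1}, …, t_j) = R(p)`. -/
def isOcc {n m : ℕ} (t : Fin n → ℝ) (p : Fin m → ℝ) (j : ℕ) : Prop :=
  ∃ (_hm : m ≤ j) (_hn : j ≤ n),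
    relOrder (fun i : Fin m => t ⟨j - m + i.val, by have := i.isLt; omega⟩) = relOrder p

/-! The relative order of a sequence is determined by its pairwise comparisons, so it commutes
with restriction to a subset of indices. The window of length `m + 1` ending at `j` restricts
to the window of length `m` ending at `j - 1`, hence an occurrence of `r` at `j` gives an
occurrence of its prefix at `j - 1`; `j ↦ j - 1` is injective since occurrences satisfy `j ≥ 1`. -/

lemma rankOf_lt_rankOf_iff {m : ℕ} (a : Fin m → ℝ) (i j : Fin m) :
    rankOf a i < rankOf a j ↔ a i < a j := by
  unfold rankOf
  constructor
  · intro h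
    by_contra! hji
    have : (Finset.univ.filter fun k => a k < a j) ⊆ Finset.univ.filter fun k => a k < a i :=
      Finset.monotone_filter_right _ fun k _ hk => hk.trans_le hji
    have := Finset.card_le_card this
    omega
  · intro h
    have : (Finset.univ.filter fun k => a k < a i) ⊂ Finset.univ.filter fun k => a k < a j :=
      (Finset.ssubset_iff_of_subset (Finset.monotone_filter_right _ fun k _ hk => hk.trans h)).mpr
        ⟨i, by simp [h], by simp⟩
    have := Finset.card_lt_card this
    omega

lemma relOrder_eq_iff {m : ℕ} (a b : Fin m → ℝ) :
    relOrder a = relOrder b ↔ ∀ i j, a i < a j ↔ b i < b j := by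
  constructor
  · intro h i j
    rw [← rankOf_lt_rankOf_iff, ← rankOf_lt_rankOf_iff]
    exact Iff.of_eq (congrArg₂ (· < ·) (congrFun h i) (congrFun h j))
  · intro h
    funext i
    unfold relOrder rankOf
    congr 1
    exact congrArg Finset.card (Finset.filter_congr fun k _ => h k i)

lemma relOrder_comp_eq {m k : ℕ} {a b : Fin m → ℝ} (h : relOrder a = relOrder b)
    (f : Fin k → Fin m) : relOrder (a ∘ f) = relOrder (b ∘ f) :=
  (relOrder_eq_iff _ _).mpr fun i j => (relOrder_eq_iff a b).mp h (f i) (f j)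

section Occurrences

variable {n m : ℕ} {t : Fin n → ℝ}

lemma isOcc.length_le {p : Fin m → ℝ} {j : ℕ} (h : isOcc t p j) : m ≤ j := h.1

lemma setOf_isOcc_finite (p : Fin m → ℝ) : {j : ℕ | isOcc t p j}.Finite :=
  (Set.finite_Iic n).subset fun _ ⟨_, hjn, _⟩ => hjn

lemma isOcc.prefix {r : Fin (m + 1) → ℝ} {j : ℕ} (h : isOcc t r j) :
    isOcc t (fun i : Fin m => r i.castSucc) (j - 1) := by
  obtain ⟨hmj, hjn, horder⟩ := h
  refine ⟨by omega, by omega, ?_⟩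
  refine Eq.trans ?_ (relOrder_comp_eq horder Fin.castSucc)
  congr 1
  ext i
  simp only [Function.comp_apply, Fin.val_castSucc]
  congr 2
  omega

end Occurrences

theorem prefix_antimonotone_general {n m : ℕ} (t : Fin n → ℝ)
    (r : Fin (m + 1) → ℝ) :
    (∀ j : ℕ, isOcc t r j → isOcc t (fun i : Fin m => r i.castSucc) (j - 1)) ∧
    Set.InjOn (fun j => j - 1) {j : ℕ | isOcc t r j} ∧
    Set.MapsTo (fun j => j - 1) {j : ℕ | isOcc t r j}
      {j : ℕ | isOcc t (fun i : Fin m => r i.castSucc) j} ∧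
    {j : ℕ | isOcc t r j}.ncard ≤
      {j : ℕ | isOcc t (fun i : Fin m => r i.castSucc) j}.ncard := by
  have maps : Set.MapsTo (fun j => j - 1) {j : ℕ | isOcc t r j}
      {j : ℕ | isOcc t (fun i : Fin m => r i.castSucc) j} := fun _ hj => isOcc.prefix hj
  have inj : Set.InjOn (fun j => j - 1) {j : ℕ | isOcc t r j} := fun a ha b hb hab => by
    have := isOcc.length_le ha
    have := isOcc.length_le hb
    simp only at hab
    omega
  exact ⟨fun _ => isOcc.prefix, inj, maps,
    Set.ncard_le_ncard_of_injOn _ maps inj (setOf_isOcc_finite _)⟩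

/-- Anti-monotonicity with respect to the prefix pattern: every occurrence `⟨j⟩` of
`r = (r_1, …, r_{m+1})` yields an occurrence `⟨j-1⟩` of the prefix sub-pattern
`e = (r_1, …, r_m)`; the map `j ↦ j - 1` injects `L_r` into `L_e`; and
`|L_r| ≤ |L_e|`. -/
theorem prefix_antimonotone {n m : ℕ} (hm : 1 ≤ m) (t : Fin n → ℝ)
    (r : Fin (m + 1) → ℝ) :
    (∀ j : ℕ, isOcc t r j → isOcc t (fun i : Fin m => r i.castSucc) (j - 1)) ∧
    Set.InjOn (fun j => j - 1) {j : ℕ | isOcc t r j} ∧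
    Set.MapsTo (fun j => j - 1) {j : ℕ | isOcc t r j}
      {j : ℕ | isOcc t (fun i : Fin m => r i.castSucc) j} ∧
    {j : ℕ | isOcc t r j}.ncard ≤
      {j : ℕ | isOcc t (fun i : Fin m => r i.castSucc) j}.ncard :=
  prefix_antimonotone_general t r
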